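/- Let a ≥ 2 be a real number and let P ∈ E_a(ℝ) be a point of infinite order. Then −(1/4)·log a − 1/(2·√a) < ( (1/2)·log max{1, |x(P)|} − (1/12)·log|Δ(E_a)| ) − λ_∞(P) < 0. -/

import Mathlib

open Filter Real

/-- The translated elliptic curve `E'_a : y² = x³ − 3√a·x² + 4a·x − 2a^{3/2}` over `ℝ`,
obtained from `E_a : y² = x³ + a·x` via `x ↦ x + √a`. -/
noncomputable def E'curve (a : ℝ) : WeierstrassCurve.Affine ℝ :=
  { a₁ := 0, a₂ := -3 * Real.sqrt a, a₃ := 0, a₄ := 4 * a, a₆ := -2 * a ^ ((3 : ℝ) / 2) }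

/-- The x-coordinate of a point (with junk value `0` at the identity `O`). -/
def xc {F : Type*} [Field F] {W : WeierstrassCurve.Affine F} : W.Point → F
  | .zero => 0
  | @WeierstrassCurve.Affine.Point.some _ _ _ x _ _ => x

/-- For a finite point `Q` of `E'_a` with `x(Q) = x`, the quantity
`z(Q) = 1 − 8a·x⁻² + 16·a^{3/2}·x⁻³ − 8a²·x⁻⁴` from Tate's series. -/
noncomputable def zE' (a x : ℝ) : ℝ :=
  1 - 8 * a / x ^ 2 + 16 * a ^ ((3 : ℝ) / 2) / x ^ 3 - 8 * a ^ 2 / x ^ 4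

/-- The archimedean local height of a point `P ∈ E_a(ℝ)` of infinite order (`a > 0`),
computed on the translated curve `E'_a` at the corresponding point `P'`:
`λ_∞(P) = (1/8)·log(x(P')⁴·z(P')) + (1/8)·S − (1/12)·log|Δ(E_a)|`, where `S` is the
(hypothesized) value of the series `∑_{k≥1} 4^{−k}·log z(2^kP')` and `Δ(E_a) = −64a³`. -/
noncomputable def lamInf' (a : ℝ) {W : WeierstrassCurve.Affine ℝ} (P' : W.Point) (S : ℝ) : ℝ :=
  (1 / 8) * Real.log ((xc P') ^ 4 * zE' a (xc P')) + (1 / 8) * S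
    - (1 / 12) * Real.log |(-64) * a ^ 3|

/-! In the coordinate `u = x(P')/√a > 1` both the doubling map and Tate's factor `z` become
independent of `a`, and the quantity to be bounded equals
`(log max{1, √a(u₀ - 1)} - log (√a u₀))/2 + R/8` with `R = ∑ₖ 4⁻ᵏ (-log z(u_k)) ≥ 0`, where
`u_k` is the coordinate of `2ᵏP'`. Since `1/2 ≤ z ≤ 1` we have `R ≤ (4/3) log 2`, and
`R ≤ 4/u₀` once `u₀ > 4`. The lower bound follows from `√a u₀ ≤ (1 + √a) max{1, √a(u₀ - 1)}`,
the upper bound from `R < 4 log (√a u₀)` and `R < 4 log (u₀/(u₀ - 1))`. -/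

-- `zNorm u = zE' a (√a * u)`, and `dblNorm` is the doubling map in the coordinate `x/√a`.
noncomputable def zNorm (u : ℝ) : ℝ := 1 - 8 / u ^ 2 + 16 / u ^ 3 - 8 / u ^ 4

noncomputable def dblNorm (u : ℝ) : ℝ :=
  (u ^ 4 - 8 * (u - 1) ^ 2) / (4 * (u - 1) * ((u - 1) ^ 2 + 1))

section Normalized

variable {u : ℝ}

lemma zNorm_eq_div (hu : u ≠ 0) : zNorm u = (u ^ 4 - 8 * (u - 1) ^ 2) / u ^ 4 := by
  unfold zNorm; field_simp; ring

lemma one_sub_zNorm (hu : u ≠ 0) : 1 - zNorm u = 8 * (u - 1) ^ 2 / u ^ 4 := by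
  rw [zNorm_eq_div hu]; field_simp; ring

lemma zNorm_le_one (hu : u ≠ 0) : zNorm u ≤ 1 := by
  have : 0 ≤ 1 - zNorm u := by rw [one_sub_zNorm hu]; positivity
  linarith

lemma half_le_zNorm (hu : 1 < u) : 1 / 2 ≤ zNorm u := by
  have key : zNorm u - 1 / 2 = (u - 2) ^ 2 * ((u + 2) ^ 2 - 8) / (2 * u ^ 4) := by
    unfold zNorm; field_simp; ring
  have : 0 ≤ (u - 2) ^ 2 * ((u + 2) ^ 2 - 8) := by nlinarith [sq_nonneg (u - 2)]
  have : 0 ≤ zNorm u - 1 / 2 := by rw [key]; positivity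
  linarith

lemma neg_log_zNorm_nonneg (hu : 1 < u) : 0 ≤ -log (zNorm u) := by
  have := log_nonpos (by linarith [half_le_zNorm hu]) (zNorm_le_one (by positivity))
  linarith

lemma neg_log_zNorm_le_log_two (hu : 1 < u) : -log (zNorm u) ≤ log 2 := by
  have := log_le_log (by norm_num) (half_le_zNorm hu)
  rw [one_div, log_inv] at this
  linarith

lemma neg_log_zNorm_le (hu : 1 < u) : -log (zNorm u) ≤ (zNorm u)⁻¹ - 1 := by
  linarith [one_sub_inv_le_log_of_pos (show 0 < zNorm u by linarith [half_le_zNorm hu])]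

lemma inv_zNorm_sub_one (hu : 1 < u) :
    (zNorm u)⁻¹ - 1 = 8 * (u - 1) ^ 2 / (u ^ 4 - 8 * (u - 1) ^ 2) := by
  have hz : 0 < zNorm u := by linarith [half_le_zNorm hu]
  have hp : 0 < u ^ 4 - 8 * (u - 1) ^ 2 := by
    have := zNorm_eq_div (u := u) (by positivity)
    rw [this] at hz
    exact (div_pos_iff_of_pos_right (by positivity)).1 hz
  rw [zNorm_eq_div (by positivity), inv_div, div_sub_one hp.ne']
  ring

lemma dblNorm_sub_one_lt (hu : 2 ≤ u) : dblNorm u - 1 < (u - 1) / 4 := by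
  have hD : 0 < 4 * (u - 1) * ((u - 1) ^ 2 + 1) := by nlinarith
  rw [dblNorm, div_sub_one hD.ne', div_lt_iff₀ hD]
  nlinarith [sq_nonneg (u - 1)]

lemma le_of_dblNorm_le_four (hu : 4 < u) (h : dblNorm u ≤ 4) : u ≤ 67 / 5 := by
  have hD : 0 < 4 * (u - 1) * ((u - 1) ^ 2 + 1) := by nlinarith
  rw [dblNorm, div_le_iff₀ hD] at h
  nlinarith [sq_nonneg (u - 1)]

lemma inv_zNorm_sub_one_add_log_two_div_three_le (h4 : 4 < u) (h13 : u ≤ 67 / 5) :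
    (zNorm u)⁻¹ - 1 + log 2 / 3 ≤ 4 / u := by
  have hlog2 : log 2 / 3 ≤ 2311 / 10000 := by linarith [log_two_lt_d9]
  have hp : 0 < u ^ 4 - 8 * (u - 1) ^ 2 := by nlinarith
  suffices 8 * (u - 1) ^ 2 / (u ^ 4 - 8 * (u - 1) ^ 2) + 2311 / 10000 ≤ 4 / u by
    rw [inv_zNorm_sub_one (by linarith)]; linarith
  rw [div_add' _ _ _ hp.ne', div_le_div_iff₀ hp (by linarith)]
  have hI : 0 ≤ (u - 4) * (67 / 5 - u) := by nlinarith
  nlinarith [mul_nonneg hI (sq_nonneg u), mul_nonneg hI (by linarith : (0 : ℝ) ≤ u),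
    sq_nonneg (u - 4), sq_nonneg (u - 13)]

lemma inv_zNorm_sub_one_add_inv_dblNorm_le (hu : 6 ≤ u) :
    (zNorm u)⁻¹ - 1 + (dblNorm u)⁻¹ ≤ 4 / u := by
  have hp : 0 < u ^ 4 - 8 * (u - 1) ^ 2 := by nlinarith
  have hsum : (zNorm u)⁻¹ - 1 + (dblNorm u)⁻¹
      = 4 * u ^ 2 * (u - 1) / (u ^ 4 - 8 * (u - 1) ^ 2) := by
    rw [inv_zNorm_sub_one (by linarith), dblNorm, inv_div]
    field_simp
    ring
  rw [hsum, div_le_div_iff₀ hp (by linarith)]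
  nlinarith [mul_nonneg (mul_nonneg (by linarith : (0 : ℝ) ≤ u - 6) (sq_nonneg u))
    (by linarith : (0 : ℝ) ≤ u), sq_nonneg (u - 1)]

end Normalized

noncomputable def quarterTail (W : ℕ → ℝ) (m : ℕ) : ℝ := ∑' k : ℕ, (1 / 4 : ℝ) ^ k * W (k + m)

section QuarterTail

variable {W : ℕ → ℝ} {C : ℝ}

lemma summable_quarterTail (h0 : ∀ k, 0 ≤ W k) (hC : ∀ k, W k ≤ C) (m : ℕ) :
    Summable fun k : ℕ => (1 / 4 : ℝ) ^ k * W (k + m) :=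
  .of_nonneg_of_le (fun k => mul_nonneg (by positivity) (h0 _))
    (fun k => mul_le_mul_of_nonneg_left (hC _) (by positivity))
    ((summable_geometric_of_lt_one (by norm_num) (by norm_num)).mul_right C)

lemma quarterTail_nonneg (h0 : ∀ k, 0 ≤ W k) (m : ℕ) : 0 ≤ quarterTail W m :=
  tsum_nonneg fun k => mul_nonneg (by positivity) (h0 _)

lemma quarterTail_le (h0 : ∀ k, 0 ≤ W k) (hC : ∀ k, W k ≤ C) (m : ℕ) :
    quarterTail W m ≤ 4 / 3 * C := by
  have hgeom := hasSum_geometric_of_lt_one (r := (1 / 4 : ℝ)) (by norm_num) (by norm_num)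
  calc quarterTail W m ≤ ∑' k : ℕ, (1 / 4 : ℝ) ^ k * C :=
        (summable_quarterTail h0 hC m).tsum_le_tsum
          (fun k => mul_le_mul_of_nonneg_left (hC _) (by positivity)) (hgeom.summable.mul_right C)
    _ = 4 / 3 * C := by rw [(hgeom.mul_right C).tsum_eq]; norm_num

lemma quarterTail_eq_add (h0 : ∀ k, 0 ≤ W k) (hC : ∀ k, W k ≤ C) (m : ℕ) :
    quarterTail W m = W m + quarterTail W (m + 1) / 4 := by
  rw [quarterTail, (summable_quarterTail h0 hC m).tsum_eq_zero_add, quarterTail,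
    ← tsum_div_const]
  simp only [pow_zero, one_mul, zero_add, pow_succ]
  congr 1
  exact tsum_congr fun k => by rw [add_assoc, add_comm 1 m]; ring

end QuarterTail

section TateSeries

variable {u : ℕ → ℝ}

lemma quarterTail_neg_log_zNorm_le (hu : ∀ k, 1 < u k) (hrec : ∀ k, u (k + 1) = dblNorm (u k))
    {m : ℕ} (hm : 4 < u m) : quarterTail (fun k => -log (zNorm (u k))) m ≤ 4 / u m := by
  set W : ℕ → ℝ := fun k => -log (zNorm (u k))
  have h0 : ∀ k, 0 ≤ W k := fun k => neg_log_zNorm_nonneg (hu k)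
  have hC : ∀ k, W k ≤ log 2 := fun k => neg_log_zNorm_le_log_two (hu k)
  -- `u - 1` shrinks by a factor of four at each doubling, so the induction on `n` terminates.
  suffices H : ∀ n : ℕ, ∀ m, u m - 1 < 3 * 4 ^ n → 4 < u m → quarterTail W m ≤ 4 / u m by
    obtain ⟨n, hn⟩ := pow_unbounded_of_one_lt (u m) (by norm_num : (1 : ℝ) < 4)
    exact H n m (by linarith) hm
  intro n
  induction n with
  | zero => intro m hle h4; norm_num at hle; linarith
  | succ n ih =>
    intro m hle h4
    have hW : W m ≤ (zNorm (u m))⁻¹ - 1 := neg_log_zNorm_le (hu m)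
    rw [quarterTail_eq_add h0 hC m]
    rcases le_or_gt (u (m + 1)) 4 with hnext | hnext
    · have hR := quarterTail_le h0 hC (m + 1)
      have := inv_zNorm_sub_one_add_log_two_div_three_le h4
        (le_of_dblNorm_le_four h4 (hrec m ▸ hnext))
      linarith
    · have hshrink := hrec m ▸ dblNorm_sub_one_lt (u := u m) (by linarith)
      have hR := ih (m + 1) (by rw [pow_succ] at hle; linarith) hnext
      have := inv_zNorm_sub_one_add_inv_dblNorm_le (u := u m) (by linarith)
      rw [← hrec m] at this
      have : 4 / u (m + 1) / 4 = (u (m + 1))⁻¹ := by ring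
      linarith

lemma quarterTail_neg_log_zNorm_lt (hu : ∀ k, 1 < u k) (hrec : ∀ k, u (k + 1) = dblNorm (u k)) :
    quarterTail (fun k => -log (zNorm (u k))) 0 < 4 * log (u 0 / (u 0 - 1)) := by
  have hu0 := hu 0
  rcases le_or_gt (u 0) 4 with h4 | h4
  · have hR := quarterTail_le (fun k => neg_log_zNorm_nonneg (hu k))
      (fun k => neg_log_zNorm_le_log_two (hu k)) 0
    have hmono : log (4 / 3) ≤ log (u 0 / (u 0 - 1)) :=
      log_le_log (by norm_num) (by rw [le_div_iff₀ (by linarith)]; linarith)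
    have h64 : log 2 < 3 * log (4 / 3) := by
      rw [show 3 * log (4 / 3 : ℝ) = log ((4 / 3) ^ 3) by rw [log_pow]; norm_num]
      exact log_lt_log (by norm_num) (by norm_num)
    linarith
  · have hR := quarterTail_neg_log_zNorm_le hu hrec h4
    have hlog : 1 / u 0 < log (u 0 / (u 0 - 1)) := by
      have := log_lt_sub_one_of_pos (x := (u 0 - 1) / u 0) (by positivity)
        (by rw [Ne, div_eq_one_iff_eq (by positivity)]; linarith)
      rw [← inv_div (u 0 - 1), log_inv]
      have : (u 0 - 1) / u 0 - 1 = -(1 / u 0) := by field_simp; ring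
      linarith
    have : 4 / u 0 = 4 * (1 / u 0) := by ring
    linarith

end TateSeries

section Curve

open WeierstrassCurve.Affine

variable {a : ℝ}

lemma rpow_three_div_two (ha : 0 ≤ a) : a ^ ((3 : ℝ) / 2) = √a ^ 3 := by
  rw [sqrt_eq_rpow, ← rpow_natCast, ← rpow_mul ha]; norm_num

lemma E'curve_equation_iff (ha : 0 ≤ a) (x y : ℝ) :
    (E'curve a).Equation x y ↔ y ^ 2 = (x - √a) * ((x - √a) ^ 2 + a) := by
  have ht := sq_sqrt ha
  rw [equation_iff]
  simp only [E'curve, rpow_three_div_two ha]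
  constructor <;> intro h
  · linear_combination h - (3 * x + √a) * ht
  · linear_combination h + (3 * x + √a) * ht

lemma Y_ne_zero_of_two_smul_ne_zero {x y : ℝ} {h : (E'curve a).Nonsingular x y}
    (h2 : 2 • Point.some x y h ≠ 0) : y ≠ 0 := by
  rintro rfl
  exact h2 (by rw [two_smul]; exact Point.add_self_of_Y_eq (by simp [E'curve]))

lemma xc_two_smul_mul (ha : 0 ≤ a) {x y : ℝ} {h : (E'curve a).Nonsingular x y} (hy : y ≠ 0) :
    xc (2 • Point.some x y h) * (4 * y ^ 2) = x ^ 4 - 8 * a * (x - √a) ^ 2 := by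
  have hy' : y ≠ (E'curve a).negY x y := by
    simp only [negY, E'curve]; intro h; exact hy (by linarith)
  have heq := (E'curve_equation_iff ha x y).1 h.1
  have ht := sq_sqrt ha
  rw [two_smul, Point.add_self_of_Y_ne hy']
  show (E'curve a).addX x x ((E'curve a).slope x x y y) * _ = _
  rw [slope_of_Y_ne rfl hy']
  simp only [addX, negY, E'curve, zero_mul, sub_zero, add_zero, sub_neg_eq_add]
  field_simp
  set t := √a
  rw [← ht] at heq ⊢
  linear_combination 16 * (3 * t - 2 * x) * heq

lemma one_lt_xc_div_sqrt (ha : 0 < a) {Q : (E'curve a).Point} (hQ : 2 • Q ≠ 0) :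
    1 < xc Q / √a := by
  cases Q with
  | zero => exact (hQ (nsmul_zero 2)).elim
  | some x y h =>
    have hy := Y_ne_zero_of_two_smul_ne_zero hQ
    have heq := (E'curve_equation_iff ha.le x y).1 h.1
    rw [one_lt_div (sqrt_pos.2 ha)]
    show √a < x
    nlinarith [pow_pos (sq_pos_of_ne_zero hy) 1, sq_nonneg (x - √a)]

lemma xc_two_smul_div_sqrt (ha : 0 < a) {Q : (E'curve a).Point} (hQ : 2 • Q ≠ 0) :
    xc (2 • Q) / √a = dblNorm (xc Q / √a) := by
  have hu := one_lt_xc_div_sqrt ha hQ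
  cases Q with
  | zero => exact (hQ (nsmul_zero 2)).elim
  | some x y h =>
    have hy := Y_ne_zero_of_two_smul_ne_zero hQ
    have hdbl := xc_two_smul_mul ha.le (h := h) hy
    have heq := (E'curve_equation_iff ha.le x y).1 h.1
    change 1 < x / √a at hu
    change _ = dblNorm (x / √a)
    generalize xc (2 • Point.some x y h) = X at hdbl ⊢
    set t := √a
    have ht : 0 < t := sqrt_pos.2 ha
    rw [← sq_sqrt ha.le] at hdbl heq
    obtain ⟨u, rfl⟩ : ∃ u, x = t * u := ⟨x / t, by field_simp⟩
    rw [mul_div_cancel_left₀ _ ht.ne'] at hu ⊢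
    have hD : 0 < 4 * (u - 1) * ((u - 1) ^ 2 + 1) := by nlinarith
    rw [dblNorm, div_eq_div_iff ht.ne' hD.ne']
    refine mul_left_cancel₀ (pow_pos ht 3).ne' ?_
    rw [heq] at hdbl
    linear_combination hdbl

lemma zE'_eq_zNorm (ha : 0 < a) (x : ℝ) : zE' a x = zNorm (x / √a) := by
  rcases eq_or_ne x 0 with rfl | hx
  · simp [zE', zNorm]
  rw [zE', zNorm, rpow_three_div_two ha.le]
  set t := √a
  have ht : t ≠ 0 := (sqrt_pos.2 ha).ne'
  rw [← sq_sqrt ha.le]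
  field_simp
  ring

end Curve

lemma log_mul_sub_log_max_lt {t u : ℝ} (ht : 0 < t) (hu : 1 < u) :
    log (t * u) - log (max 1 (t * (u - 1))) < log t + 1 / t := by
  set M := max 1 (t * (u - 1))
  have hM : 1 ≤ M := le_max_left _ _
  have hle : t * u ≤ M * (1 + t) := by
    nlinarith [mul_le_mul_of_nonneg_left hM ht.le, le_max_right 1 (t * (u - 1))]
  have h1 : log (t * u) ≤ log M + log (1 + t) := by
    rw [← log_mul (by positivity) (by positivity)]
    exact log_le_log (by nlinarith) hle
  have h2 : log ((1 + t) / t) < (1 + t) / t - 1 :=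
    log_lt_sub_one_of_pos (by positivity) (by rw [Ne, div_eq_one_iff_eq ht.ne']; linarith)
  rw [log_div (by positivity) ht.ne'] at h2
  have : (1 + t) / t - 1 = 1 / t := by field_simp; ring
  linarith

lemma lt_log_mul_sub_log_max {t u r : ℝ} (ht : 0 < t) (hu : 1 < u) (h1 : r < log (t * u))
    (h2 : r < log (u / (u - 1))) : r < log (t * u) - log (max 1 (t * (u - 1))) := by
  rcases le_total (t * (u - 1)) 1 with h | h
  · rwa [max_eq_left h, log_one, sub_zero]
  · rwa [max_eq_right h, ← log_div (by positivity) (by nlinarith), mul_div_mul_left _ _ ht.ne']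

lemma two_smul_two_pow_smul_ne_zero {G : Type*} [AddMonoid G] {P : G}
    (hP : ∀ n : ℕ, 0 < n → n • P ≠ 0) (k : ℕ) : 2 • (2 ^ k) • P ≠ 0 := by
  rw [smul_smul, ← pow_succ']; exact hP _ (by positivity)

noncomputable def orbitCoord (a : ℝ) (P : (E'curve a).Point) (k : ℕ) : ℝ := xc ((2 ^ k) • P) / √a

section Orbit

variable {a : ℝ} {P : (E'curve a).Point}

lemma one_lt_orbitCoord (ha : 0 < a) (hP : ∀ n : ℕ, 0 < n → n • P ≠ 0) (k : ℕ) :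
    1 < orbitCoord a P k :=
  one_lt_xc_div_sqrt ha (two_smul_two_pow_smul_ne_zero hP k)

lemma orbitCoord_succ (ha : 0 < a) (hP : ∀ n : ℕ, 0 < n → n • P ≠ 0) (k : ℕ) :
    orbitCoord a P (k + 1) = dblNorm (orbitCoord a P k) := by
  simp only [orbitCoord, pow_succ', ← smul_smul]
  exact xc_two_smul_div_sqrt ha (two_smul_two_pow_smul_ne_zero hP k)

lemma xc_eq_sqrt_mul_orbitCoord_zero (ha : 0 < a) : xc P = √a * orbitCoord a P 0 := by
  have : √a ≠ 0 := (sqrt_pos.2 ha).ne'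
  simp only [orbitCoord, pow_zero, one_smul]
  field_simp

lemma lamInf'_eq (ha : 0 < a) (hP : ∀ n : ℕ, 0 < n → n • P ≠ 0) {S : ℝ}
    (hS : HasSum (fun k : ℕ => (1 / 4 : ℝ) ^ (k + 1) * log (zE' a (xc ((2 ^ (k + 1)) • P)))) S) :
    lamInf' a P S = log (√a * orbitCoord a P 0) / 2
      - quarterTail (fun k => -log (zNorm (orbitCoord a P k))) 0 / 8
      - 1 / 12 * log |(-64) * a ^ 3| := by
  set u := orbitCoord a P
  set W : ℕ → ℝ := fun k => -log (zNorm (u k))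
  have hu := one_lt_orbitCoord ha hP
  have h0 : ∀ k, 0 ≤ W k := fun k => neg_log_zNorm_nonneg (hu k)
  have hC : ∀ k, W k ≤ log 2 := fun k => neg_log_zNorm_le_log_two (hu k)
  have hterm : ∀ k : ℕ, (1 / 4 : ℝ) ^ (k + 1) * log (zE' a (xc ((2 ^ (k + 1)) • P)))
      = -((1 / 4) ^ k * W (k + 1) / 4) := fun k => by
    simp only [W, u, orbitCoord, zE'_eq_zNorm ha, pow_succ]; ring
  simp only [hterm] at hS
  have hSR : S = -(quarterTail W 1 / 4) :=
    hS.unique ((summable_quarterTail h0 hC 1).hasSum.div_const 4).neg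
  have hx : 0 < √a * u 0 := mul_pos (sqrt_pos.2 ha) (by linarith [hu 0])
  have hz : 0 < zNorm (u 0) := by linarith [half_le_zNorm (hu 0)]
  rw [lamInf', zE'_eq_zNorm ha, xc_eq_sqrt_mul_orbitCoord_zero ha,
    mul_div_cancel_left₀ _ (sqrt_pos.2 ha).ne', quarterTail_eq_add h0 hC 0, hSR,
    log_mul (pow_pos hx 4).ne' hz.ne', log_pow]
  simp only [W]
  ring

end Orbit

/-- Lemma 3.4(b): for `a ≥ 2` and a point `P ∈ E_a(ℝ)` of infinite order (given by the
corresponding point `P'` on the translated curve `E'_a`, so `x(P) = x(P') − √a`),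
`−(1/4)·log a − 1/(2·√a)
  < ((1/2)·log max{1,|x(P)|} − (1/12)·log|Δ(E_a)|) − λ_∞(P) < 0`. -/
theorem arch_a_pos_part_b (a : ℝ) (ha : 2 ≤ a)
    (P' : (E'curve a).Point)
    (hP : ∀ n : ℕ, 0 < n → n • P' ≠ 0)
    (S : ℝ)
    (hS : HasSum
      (fun k : ℕ => (1 / 4 : ℝ) ^ (k + 1) * Real.log (zE' a (xc ((2 ^ (k + 1)) • P')))) S) :
    -(1 / 4) * Real.log a - 1 / (2 * Real.sqrt a)
        < ((1 / 2) * Real.log (max 1 |xc P' - Real.sqrt a|)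
              - (1 / 12) * Real.log |(-64) * a ^ 3|)
            - lamInf' a P' S ∧
      ((1 / 2) * Real.log (max 1 |xc P' - Real.sqrt a|)
            - (1 / 12) * Real.log |(-64) * a ^ 3|)
          - lamInf' a P' S < 0 := by
  have ha0 : 0 < a := by linarith
  have ht : 0 < √a := sqrt_pos.2 ha0
  set u := orbitCoord a P'
  set R := quarterTail (fun k => -log (zNorm (u k))) 0
  have hu := one_lt_orbitCoord ha0 hP
  have habs : |xc P' - √a| = √a * (u 0 - 1) := by
    rw [xc_eq_sqrt_mul_orbitCoord_zero ha0, ← mul_sub_one, abs_of_pos (by nlinarith [hu 0])]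
  rw [lamInf'_eq ha0 hP hS, habs]
  constructor
  · have hR := quarterTail_nonneg (fun k => neg_log_zNorm_nonneg (hu k)) 0
    have hlog := log_mul_sub_log_max_lt ht (hu 0)
    rw [log_sqrt ha0.le] at hlog
    have : 1 / (2 * √a) = 1 / √a / 2 := by ring
    linarith
  · have hR := quarterTail_le (fun k => neg_log_zNorm_nonneg (hu k))
      (fun k => neg_log_zNorm_le_log_two (hu k)) 0
    have hlog_t : log 2 / 2 ≤ log √a := by
      rw [log_sqrt ha0.le]; linarith [log_le_log two_pos ha]
    have : log √a < log (√a * u 0) := log_lt_log ht (by nlinarith [hu 0])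
    have := lt_log_mul_sub_log_max (r := R / 4) ht (hu 0)
      (by linarith [log_pos one_lt_two])
      (by linarith [quarterTail_neg_log_zNorm_lt hu (orbitCoord_succ ha0 hP)])
    linarith
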